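/- Let α > 0 and let β, δ ∈ ℝ. The function φ(x,y,t) = e^{(16α² − β + 4αδ)t}((c₁y + c₂)cos(2√α·x) + (c₃y + c₄)sin(2√α·x)) satisfies, for every real u, the identity φ·(2αu + β) + φ_t + g(u)φ_yy − φ_yyyy + (u/2 + δ)φ_xx − 2φ_xxyy − φ_xxxx = 0, i.e., it is a nonlocal substitution establishing nonlinear self-adjointness of the equation u_t = αu² + βu + γ + g'(u)u_y² + g(u)u_yy − u_yyyy + (1/2)u_x² + (δ + u/2)u_xx − 2u_xxyy − u_xxxx. -/

import Mathlib

noncomputable section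

def px (f : ℝ → ℝ → ℝ → ℝ) : ℝ → ℝ → ℝ → ℝ := fun x y t => deriv (fun s => f s y t) x
def py (f : ℝ → ℝ → ℝ → ℝ) : ℝ → ℝ → ℝ → ℝ := fun x y t => deriv (fun s => f x s t) y
def pt (f : ℝ → ℝ → ℝ → ℝ) : ℝ → ℝ → ℝ → ℝ := fun x y t => deriv (fun s => f x y s) t

/-- The substitution
`φ(x,y,t) = e^{(16α²−β+4αδ)t}((c₁y+c₂)cos(2√α x) + (c₃y+c₄)sin(2√α x))`. -/
def Φ (α β δ c₁ c₂ c₃ c₄ : ℝ) : ℝ → ℝ → ℝ → ℝ :=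
  fun x y t => Real.exp ((16 * α ^ 2 - β + 4 * α * δ) * t) *
    ((c₁ * y + c₂) * Real.cos (2 * Real.sqrt α * x)
      + (c₃ * y + c₄) * Real.sin (2 * Real.sqrt α * x))

/-- General shape of `Φ` and its derivatives. -/
def G (r k : ℝ) (A B : ℝ → ℝ) : ℝ → ℝ → ℝ → ℝ :=
  fun x y t => Real.exp (r * t) * (A y * Real.cos (k * x) + B y * Real.sin (k * x))

lemma hasDerivAt_trig (E A B k x : ℝ) :
    HasDerivAt (fun s => E * (A * Real.cos (k * s) + B * Real.sin (k * s)))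
      (E * ((B * k) * Real.cos (k * x) + (-(A * k)) * Real.sin (k * x))) x := by
  have h1 : HasDerivAt (fun s : ℝ => k * s) k x := by
    simpa using (hasDerivAt_id x).const_mul k
  have hc : HasDerivAt (fun s => Real.cos (k * s)) (-Real.sin (k * x) * k) x :=
    (Real.hasDerivAt_cos (k * x)).comp x h1
  have hs : HasDerivAt (fun s => Real.sin (k * s)) (Real.cos (k * x) * k) x :=
    (Real.hasDerivAt_sin (k * x)).comp x h1
  have h := ((hc.const_mul A).add (hs.const_mul B)).const_mul E
  refine h.congr_deriv ?_
  ring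

lemma px_G (r k : ℝ) (A B : ℝ → ℝ) :
    px (G r k A B) = G r k (fun y => B y * k) (fun y => -(A y * k)) := by
  funext x y t
  exact (hasDerivAt_trig (Real.exp (r * t)) (A y) (B y) k x).deriv

lemma py_G (r k : ℝ) (A B A' B' : ℝ → ℝ)
    (hA : ∀ y, HasDerivAt A (A' y) y) (hB : ∀ y, HasDerivAt B (B' y) y) :
    py (G r k A B) = G r k A' B' := by
  funext x y t
  have h := (((hA y).mul_const (Real.cos (k * x))).add
      ((hB y).mul_const (Real.sin (k * x)))).const_mul (Real.exp (r * t))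
  exact h.deriv

lemma pt_G (r k : ℝ) (A B : ℝ → ℝ) :
    pt (G r k A B) = G r k (fun y => r * A y) (fun y => r * B y) := by
  funext x y t
  have h1 : HasDerivAt (fun s : ℝ => r * s) r t := by
    simpa using (hasDerivAt_id t).const_mul r
  have he : HasDerivAt (fun s => Real.exp (r * s)) (Real.exp (r * t) * r) t :=
    (Real.hasDerivAt_exp (r * t)).comp t h1
  have h := he.mul_const (A y * Real.cos (k * x) + B y * Real.sin (k * x))
  have := h.deriv
  unfold pt G
  rw [this]
  ring

lemma Phi_eq_G (α β δ c₁ c₂ c₃ c₄ : ℝ) :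
    Φ α β δ c₁ c₂ c₃ c₄ =
      G (16 * α ^ 2 - β + 4 * α * δ) (2 * Real.sqrt α)
        (fun y => c₁ * y + c₂) (fun y => c₃ * y + c₄) := rfl

/-- `φ` satisfies the nonlinear self-adjointness condition
`φ·f'(u) + φ_t + g(u)φ_yy − φ_yyyy + r(u)φ_xx − 2φ_xxyy − φ_xxxx = 0`
with `f(u) = αu² + βu + γ` and `r(u) = u/2 + δ`, for every real `u`. -/
theorem phi_nonlinear_self_adjointness_quadratic
    (α β γ δ : ℝ) (hα : 0 < α) (g : ℝ → ℝ) (hg : ContDiff ℝ (⊤ : ℕ∞) g)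
    (c₁ c₂ c₃ c₄ : ℝ) :
    ∀ x y t u : ℝ,
      Φ α β δ c₁ c₂ c₃ c₄ x y t * (2 * α * u + β)
        + pt (Φ α β δ c₁ c₂ c₃ c₄) x y t
        + g u * py (py (Φ α β δ c₁ c₂ c₃ c₄)) x y t
        - py (py (py (py (Φ α β δ c₁ c₂ c₃ c₄)))) x y t
        + (u / 2 + δ) * px (px (Φ α β δ c₁ c₂ c₃ c₄)) x y t
        - 2 * px (px (py (py (Φ α β δ c₁ c₂ c₃ c₄)))) x y t
        - px (px (px (px (Φ α β δ c₁ c₂ c₃ c₄)))) x y t = 0 := by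
  intro x y t u
  set r : ℝ := 16 * α ^ 2 - β + 4 * α * δ with hr
  set k : ℝ := 2 * Real.sqrt α with hk
  have hk2 : k ^ 2 = 4 * α := by
    rw [hk, mul_pow, Real.sq_sqrt hα.le]; ring
  have hk4 : k ^ 4 = 16 * α ^ 2 := by
    have h : k ^ 4 = (k ^ 2) ^ 2 := by ring
    rw [h, hk2]; ring
  set A : ℝ → ℝ := fun y => c₁ * y + c₂ with hA
  set B : ℝ → ℝ := fun y => c₃ * y + c₄ with hB
  have hA' : ∀ y, HasDerivAt A ((fun _ : ℝ => c₁) y) y := fun y => by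
    simpa [hA] using ((hasDerivAt_id y).const_mul c₁).add_const c₂
  have hB' : ∀ y, HasDerivAt B ((fun _ : ℝ => c₃) y) y := fun y => by
    simpa [hB] using ((hasDerivAt_id y).const_mul c₃).add_const c₄
  have hΦ : Φ α β δ c₁ c₂ c₃ c₄ = G r k A B := Phi_eq_G α β δ c₁ c₂ c₃ c₄
  have hc0 : ∀ c : ℝ, ∀ y : ℝ, HasDerivAt (fun _ : ℝ => c) ((fun _ : ℝ => (0:ℝ)) y) y :=
    fun c y => hasDerivAt_const y c
  -- y-derivatives
  have hpy : py (G r k A B) = G r k (fun _ => c₁) (fun _ => c₃) := py_G r k A B _ _ hA' hB'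
  have hpyy : py (py (G r k A B)) = G r k (fun _ => 0) (fun _ => 0) := by
    rw [hpy]; exact py_G r k _ _ _ _ (hc0 c₁) (hc0 c₃)
  have hpy0 : py (G r k (fun _ => (0:ℝ)) (fun _ => (0:ℝ))) = G r k (fun _ => 0) (fun _ => 0) :=
    py_G r k _ _ _ _ (hc0 0) (hc0 0)
  have hpx0 : px (G r k (fun _ => (0:ℝ)) (fun _ => (0:ℝ))) = G r k (fun _ => 0) (fun _ => 0) := by
    rw [px_G]
    congr 1 <;> funext y <;> ring
  -- x-derivatives
  have hpxx : px (px (G r k A B)) = fun x y t => -(4 * α) * G r k A B x y t := by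
    rw [px_G, px_G]
    funext x y t
    unfold G
    set E := Real.exp (r * t)
    set C := Real.cos (k * x)
    set S := Real.sin (k * x)
    linear_combination (-(A y * E * C + B y * E * S)) * hk2
  have hpx4 : px (px (px (px (G r k A B)))) = fun x y t => 16 * α ^ 2 * G r k A B x y t := by
    rw [px_G, px_G, px_G, px_G]
    funext x y t
    unfold G
    set E := Real.exp (r * t)
    set C := Real.cos (k * x)
    set S := Real.sin (k * x)
    linear_combination (A y * E * C + B y * E * S) * hk4
  -- t-derivative
  have hpt : pt (G r k A B) = G r k (fun y => r * A y) (fun y => r * B y) := pt_G r k A B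
  rw [hΦ, hpt, hpyy, hpy0, hpy0, hpx0, hpx0, hpx4, hpxx]
  simp only []
  unfold G
  rw [hr]
  ring
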